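/- Let η, β : W → A, f : Σ_A W → X with ι_X = f∘θ, and let ρ : Σ_A W → B, κ_Y : B → Y, χ : X → Y form a homotopy commutative square χ∘f ≃ κ_Y∘ρ. Then for every n ≥ 1 this square splits through the Ganea constructions: there exist maps φ_i : G_i(ι_X) → G_i(κ_Y) for 1 ≤ i ≤ n such that φ_1∘ω_1 ≃ α_1(κ_Y)∘ρ, γ_{1,n}(κ_Y)∘φ_1 ≃ φ_n∘γ_{1,n}(ι_X), and g_n(κ_Y)∘φ_n ≃ χ∘g_n(ι_X), where the Ganea construction of κ_Y : B → Y is taken with base B. -/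

import Mathlib

/-!
Framework: pointed/topological homotopy theory à la Doeraene–El Haouari.
Concrete models of homotopy pullbacks (path space construction) and homotopy
pushouts (double mapping cylinders), the Ganea construction of a map,
sectional category `secat`, relative category `relcat` (and of order `k`,
`relcatk`), relative suspensions, the whisker maps `ω_n`, the Hopf category
`hcat` and the strong Hopf category `Hcat`.
-/

noncomputable section

open ContinuousMap unitInterval

universe u

section Basic

variable {W A B X Y P Z' : Type u} [TopologicalSpace W] [TopologicalSpace A] [TopologicalSpace B]
  [TopologicalSpace X] [TopologicalSpace Y] [TopologicalSpace P] [TopologicalSpace Z']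

/-- `f : X → Y` is a homotopy equivalence. -/
def IsHEquiv {X Y : Type u} [TopologicalSpace X] [TopologicalSpace Y] (f : C(X, Y)) : Prop :=
  ∃ g : C(Y, X), (f.comp g).Homotopic (ContinuousMap.id Y) ∧ (g.comp f).Homotopic (ContinuousMap.id X)

/-- `p` is a homotopy epimorphism: `u ∘ p ≃ v ∘ p` implies `u ≃ v`. -/
def IsHEpi {X Y : Type u} [TopologicalSpace X] [TopologicalSpace Y] (p : C(X, Y)) : Prop :=
  ∀ (Z : TopCat.{u}) (u v : C(Y, Z)), (u.comp p).Homotopic (v.comp p) → u.Homotopic v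

/-- The concrete homotopy pullback of `f : A → X` and `g : B → X`:
points of `A` and `B` together with a path joining their images. -/
@[reducible] def HPb (f : C(A, X)) (g : C(B, X)) : Type u :=
  {p : A × C(unitInterval, X) × B // p.2.1 0 = f p.1 ∧ p.2.1 1 = g p.2.2}

/-- First projection of the homotopy pullback. -/
def HPb.pr1 (f : C(A, X)) (g : C(B, X)) : C(HPb f g, A) :=
  ⟨fun p => p.1.1, (continuous_fst.comp continuous_subtype_val)⟩

/-- Second projection of the homotopy pullback. -/
def HPb.pr2 (f : C(A, X)) (g : C(B, X)) : C(HPb f g, B) :=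
  ⟨fun p => p.1.2.2, (continuous_snd.comp (continuous_snd.comp continuous_subtype_val))⟩

/-- The canonical homotopy `f ∘ pr1 ≃ g ∘ pr2` on the homotopy pullback,
given by evaluating the path component. -/
def HPb.evalHomotopy (f : C(A, X)) (g : C(B, X)) :
    ContinuousMap.Homotopy (f.comp (HPb.pr1 f g)) (g.comp (HPb.pr2 f g)) where
  toFun := fun q => q.2.1.2.1 q.1
  continuous_toFun := by
    have h1 : Continuous fun q : unitInterval × HPb f g => ((q.2.1.2.1 : C(unitInterval, X)), q.1) :=
      ((continuous_fst.comp (continuous_snd.comp (continuous_subtype_val.comp continuous_snd)))).prodMk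
        continuous_fst
    exact continuous_eval.comp h1
  map_zero_left := fun p => p.2.1
  map_one_left := fun p => p.2.2

/-- The whisker map into the homotopy pullback induced by a homotopy commutative square. -/
def HPb.whisker (f : C(A, X)) (g : C(B, X)) (p : C(Z', A)) (q : C(Z', B))
    (H : ContinuousMap.Homotopy (f.comp p) (g.comp q)) : C(Z', HPb f g) where
  toFun := fun z => ⟨(p z, ((H.toContinuousMap.comp ContinuousMap.prodSwap).curry z, q z)),
    ⟨H.apply_zero z, H.apply_one z⟩⟩
  continuous_toFun := by
    apply Continuous.subtype_mk
    exact (map_continuous p).prodMk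
      (((map_continuous (H.toContinuousMap.comp ContinuousMap.prodSwap).curry)).prodMk
        (map_continuous q))

/-- A homotopy commutative square is a homotopy pullback if some whisker map
to the concrete homotopy pullback is a homotopy equivalence. -/
def IsHPullback (f : C(A, X)) (g : C(B, X)) (p : C(Z', A)) (q : C(Z', B)) : Prop :=
  ∃ H : ContinuousMap.Homotopy (f.comp p) (g.comp q), IsHEquiv (HPb.whisker f g p q H)

/-- The gluing relation for the double mapping cylinder of `f : W → A` and `g : W → B`. -/
inductive DCylRel (f : C(W, A)) (g : C(W, B)) :
    (A ⊕ (B ⊕ W × unitInterval)) → (A ⊕ (B ⊕ W × unitInterval)) → Prop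
  | left (w : W) : DCylRel f g (Sum.inl (f w)) (Sum.inr (Sum.inr (w, 0)))
  | right (w : W) : DCylRel f g (Sum.inr (Sum.inl (g w))) (Sum.inr (Sum.inr (w, 1)))

/-- The double mapping cylinder: the concrete homotopy pushout of `f : W → A`, `g : W → B`. -/
@[reducible] def DCyl (f : C(W, A)) (g : C(W, B)) : Type u := Quot (DCylRel f g)

/-- Left leg of the double mapping cylinder. -/
def DCyl.inl (f : C(W, A)) (g : C(W, B)) : C(A, DCyl f g) :=
  ⟨fun a => Quot.mk _ (Sum.inl a), continuous_quot_mk.comp continuous_inl⟩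

/-- Right leg of the double mapping cylinder. -/
def DCyl.inr (f : C(W, A)) (g : C(W, B)) : C(B, DCyl f g) :=
  ⟨fun b => Quot.mk _ (Sum.inr (Sum.inl b)), continuous_quot_mk.comp (continuous_inr.comp continuous_inl)⟩

/-- The map out of a double mapping cylinder glued from `u`, `v` and a homotopy `u∘f ≃ v∘g`. -/
def DCyl.glue {f : C(W, A)} {g : C(W, B)} (u : C(A, P)) (v : C(B, P))
    (H : ContinuousMap.Homotopy (u.comp f) (v.comp g)) : C(DCyl f g, P) where
  toFun := Quot.lift (Sum.elim u (Sum.elim v (fun q => H (q.2, q.1))))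
    (by rintro x y (⟨w⟩ | ⟨w⟩)
        · exact (H.apply_zero w).symm
        · exact (H.apply_one w).symm)
  continuous_toFun := by
    apply continuous_quot_lift
    exact (map_continuous u).sumElim ((map_continuous v).sumElim
      ((H.toContinuousMap.continuous).comp continuous_swap))

/-- A homotopy commutative square is a homotopy pushout if some glued map
from the concrete double mapping cylinder is a homotopy equivalence. -/
def IsHPushout (f : C(W, A)) (g : C(W, B)) (u : C(A, P)) (v : C(B, P)) : Prop :=
  ∃ H : ContinuousMap.Homotopy (u.comp f) (v.comp g), IsHEquiv (DCyl.glue u v H)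

/-- A map `g` is relatively dominated by `f` (both defined on `B`). -/
def RelDominated {B Y X : Type u} [TopologicalSpace B] [TopologicalSpace Y] [TopologicalSpace X]
    (g : C(B, Y)) (f : C(B, X)) : Prop :=
  ∃ (φ : C(X, Y)) (sec : C(Y, X)), (φ.comp sec).Homotopic (ContinuousMap.id Y) ∧
    (φ.comp f).Homotopic g ∧ (sec.comp g).Homotopic f

end Basic

section Ganea

variable {A X : Type u} [TopologicalSpace A] [TopologicalSpace X]

/-- One stage of the Ganea construction. -/
structure GaneaAux (A X : Type u) [TopologicalSpace A] [TopologicalSpace X] where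
  /-- the space `G_n` -/
  G : Type u
  /-- its topology -/
  [topG : TopologicalSpace G]
  /-- the Ganea map `g_n : G_n → X` -/
  g : C(G, X)
  /-- the canonical map `α_n : A → G_n` -/
  α : C(A, G)

attribute [instance] GaneaAux.topG

/-- The Ganea construction of `ι : A → X`: `G_0 = A`, `g_0 = ι`, and `G_{n+1}` is the
homotopy pushout (double mapping cylinder) of the two projections of the homotopy
pullback `F_n` of `g_n` and `ι`. -/
def ganeaAux (ι : C(A, X)) : ℕ → GaneaAux A X
  | 0 => { G := A, g := ι, α := ContinuousMap.id A }
  | (n+1) =>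
    { G := DCyl (HPb.pr1 (ganeaAux ι n).g ι) (HPb.pr2 (ganeaAux ι n).g ι)
      g := DCyl.glue (ganeaAux ι n).g ι (HPb.evalHomotopy (ganeaAux ι n).g ι)
      α := DCyl.inr (HPb.pr1 (ganeaAux ι n).g ι) (HPb.pr2 (ganeaAux ι n).g ι) }

/-- The `n`-th Ganea space `G_n(ι)`. -/
def GaneaG (ι : C(A, X)) (n : ℕ) : Type u := (ganeaAux ι n).G

instance (ι : C(A, X)) (n : ℕ) : TopologicalSpace (GaneaG ι n) := (ganeaAux ι n).topG

/-- The `n`-th Ganea map `g_n : G_n(ι) → X`. -/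
def ganeaMap (ι : C(A, X)) (n : ℕ) : C(GaneaG ι n, X) := (ganeaAux ι n).g

/-- The canonical map `α_n : A → G_n(ι)`. -/
def ganeaAlpha (ι : C(A, X)) (n : ℕ) : C(A, GaneaG ι n) := (ganeaAux ι n).α

/-- The `n`-th homotopy fibre `F_n(ι)`: the homotopy pullback of `g_n` and `ι`. -/
def ganeaF (ι : C(A, X)) (n : ℕ) : Type u := HPb (ganeaMap ι n) ι

instance (ι : C(A, X)) (n : ℕ) : TopologicalSpace (ganeaF ι n) :=
  inferInstanceAs (TopologicalSpace (HPb (ganeaMap ι n) ι))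

/-- `β_n : F_n(ι) → G_n(ι)`. -/
def ganeaBeta (ι : C(A, X)) (n : ℕ) : C(ganeaF ι n, GaneaG ι n) := HPb.pr1 (ganeaMap ι n) ι

/-- `η_n : F_n(ι) → A`. -/
def ganeaEta (ι : C(A, X)) (n : ℕ) : C(ganeaF ι n, A) := HPb.pr2 (ganeaMap ι n) ι

/-- `γ_n : G_n(ι) → G_{n+1}(ι)`. -/
def ganeaGamma (ι : C(A, X)) (n : ℕ) : C(GaneaG ι n, GaneaG ι (n+1)) :=
  DCyl.inl (HPb.pr1 (ganeaAux ι n).g ι) (HPb.pr2 (ganeaAux ι n).g ι)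

/-- `γ_{k,k+m} : G_k(ι) → G_{k+m}(ι)`, the composite of the `γ_i`. -/
def ganeaGammaFrom (ι : C(A, X)) (k : ℕ) : (m : ℕ) → C(GaneaG ι k, GaneaG ι (k + m))
  | 0 => ContinuousMap.id _
  | (m+1) => (ganeaGamma ι (k+m)).comp (ganeaGammaFrom ι k m)

/-- The sectional category of `ι : A → X`: the least `n` such that `g_n : G_n(ι) → X`
admits a homotopy section. -/
def secat (ι : C(A, X)) : ℕ∞ :=
  sInf {n : ℕ∞ | ∃ m : ℕ, n = (m : ℕ∞) ∧ ∃ sec : C(X, GaneaG ι m),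
    ((ganeaMap ι m).comp sec).Homotopic (ContinuousMap.id X)}

/-- The relative category of `ι : A → X`: the least `n` such that `g_n : G_n(ι) → X`
admits a homotopy section `σ` with `σ ∘ ι ≃ α_n`. -/
def relcat (ι : C(A, X)) : ℕ∞ :=
  sInf {n : ℕ∞ | ∃ m : ℕ, n = (m : ℕ∞) ∧ ∃ sec : C(X, GaneaG ι m),
    ((ganeaMap ι m).comp sec).Homotopic (ContinuousMap.id X) ∧
    (sec.comp ι).Homotopic (ganeaAlpha ι m)}

/-- The relative category of order `k` of `ι : A → X`: the least `n (= k + m)` such that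
`g_n` admits a homotopy section `σ` with `σ ∘ g_k ≃ γ_{k,n}`. -/
def relcatk (ι : C(A, X)) (k : ℕ) : ℕ∞ :=
  sInf {n : ℕ∞ | ∃ m : ℕ, n = ((k + m : ℕ) : ℕ∞) ∧ ∃ sec : C(X, GaneaG ι (k + m)),
    ((ganeaMap ι (k + m)).comp sec).Homotopic (ContinuousMap.id X) ∧
    (sec.comp (ganeaMap ι k)).Homotopic (ganeaGammaFrom ι k m)}

/-- The Lusternik–Schnirelmann category of the pointed space `(X, x₀)`,
i.e. the relative category of `∗ → X`. -/
def ptcat (X : Type u) [TopologicalSpace X] (x₀ : X) : ℕ∞ :=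
  relcat (ContinuousMap.const PUnit.{u+1} x₀)

end Ganea

section RelSuspension

variable {W A X : Type u} [TopologicalSpace W] [TopologicalSpace A] [TopologicalSpace X]

/-- A relative suspension of `η, β : W → A`: a homotopy pushout of `η` and `β`
both of whose legs are the same map `θ : A → S`.  The structure records the
structure homotopy `K : θ∘η ≃ θ∘β` together with the fact that the glued
comparison map from the double mapping cylinder is a homotopy equivalence. -/
structure RelSusp (η β : C(W, A)) where
  /-- the total space `Σ_A W` -/
  S : Type u
  /-- its topology -/
  [topS : TopologicalSpace S]
  /-- the common leg `θ : A → Σ_A W` -/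
  θ : C(A, S)
  /-- the structure homotopy `θ∘η ≃ θ∘β` -/
  K : ContinuousMap.Homotopy (θ.comp η) (θ.comp β)
  /-- a homotopy inverse to the comparison map `DCyl η β → S` -/
  inv : C(S, DCyl η β)
  glue_inv : ((DCyl.glue θ θ K).comp inv).Homotopic (ContinuousMap.id S)
  inv_glue : (inv.comp (DCyl.glue θ θ K)).Homotopic (ContinuousMap.id (DCyl η β))

attribute [instance] RelSusp.topS

variable {η β : C(W, A)}

/-- Auxiliary: the swap-and-reverse map `W × I → I × W`. -/
def cylSwap : C(W × unitInterval, unitInterval × W) :=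
  ⟨fun p => (unitInterval.symm p.2, p.1),
    (unitInterval.continuous_symm.comp continuous_snd).prodMk continuous_fst⟩

/-- Auxiliary: the family of paths `t ↦ f (K (σ t, w))` from `ι(β w)` to `ι(η w)`. -/
def omegaPath (R : RelSusp η β) (f : C(R.S, X)) : C(W, C(unitInterval, X)) :=
  ContinuousMap.curry ((f.comp R.K.toContinuousMap).comp cylSwap)

/-- Auxiliary: the canonical map `W → F_0(ι)` underlying the whisker map `ω`. -/
def omegaF (R : RelSusp η β) (ι : C(A, X)) (f : C(R.S, X)) (hf : ∀ a, f (R.θ a) = ι a) :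
    C(W, ganeaF ι 0) where
  toFun := fun w => ⟨(β w, (omegaPath R f w, η w)), by
    constructor
    · show (omegaPath R f w) 0 = ι (β w)
      show f (R.K (unitInterval.symm 0, w)) = ι (β w)
      rw [unitInterval.symm_zero, R.K.apply_one]
      exact hf (β w)
    · show (omegaPath R f w) 1 = ι (η w)
      show f (R.K (unitInterval.symm 1, w)) = ι (η w)
      rw [unitInterval.symm_one, R.K.apply_zero]
      exact hf (η w)⟩
  continuous_toFun := by
    apply Continuous.subtype_mk
    exact (map_continuous β).prodMk ((map_continuous (omegaPath R f)).prodMk (map_continuous η))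

/-- The canonical comparison `DCyl η β → G_1(ι)` (the concrete model of `ω_1`). -/
def omegaDCyl (R : RelSusp η β) (ι : C(A, X)) (f : C(R.S, X)) (hf : ∀ a, f (R.θ a) = ι a) :
    C(DCyl η β, GaneaG ι 1) where
  toFun := Quot.lift (Sum.elim
      (fun a => ganeaAlpha ι 1 a)
      (Sum.elim (fun a => ganeaGamma ι 0 (ganeaAlpha ι 0 a))
        (fun q => Quot.mk _ (Sum.inr (Sum.inr (omegaF R ι f hf q.1, unitInterval.symm q.2))))))
    (by
      rintro x y (⟨w⟩ | ⟨w⟩)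
      · show ganeaAlpha ι 1 (η w) =
          Quot.mk _ (Sum.inr (Sum.inr (omegaF R ι f hf w, unitInterval.symm 0)))
        rw [unitInterval.symm_zero]
        exact Quot.sound (DCylRel.right (omegaF R ι f hf w))
      · show ganeaGamma ι 0 (ganeaAlpha ι 0 (β w)) =
          Quot.mk _ (Sum.inr (Sum.inr (omegaF R ι f hf w, unitInterval.symm 1)))
        rw [unitInterval.symm_one]
        exact Quot.sound (DCylRel.left (omegaF R ι f hf w)))
  continuous_toFun := by
    apply continuous_quot_lift
    apply Continuous.sumElim
    · exact map_continuous (ganeaAlpha ι 1)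
    apply Continuous.sumElim
    · exact (map_continuous (ganeaGamma ι 0)).comp (map_continuous (ganeaAlpha ι 0))
    · exact (continuous_quot_mk.comp (continuous_inr.comp continuous_inr)).comp
        (((map_continuous (omegaF R ι f hf)).comp continuous_fst).prodMk
          (unitInterval.continuous_symm.comp continuous_snd))

/-- The whisker map `ω_1 : Σ_A W → G_1(ι)`. -/
def omega1 (R : RelSusp η β) (ι : C(A, X)) (f : C(R.S, X)) (hf : ∀ a, f (R.θ a) = ι a) :
    C(R.S, GaneaG ι 1) :=
  (omegaDCyl R ι f hf).comp R.inv

/-- The whisker map `ω_{1+m} = γ_{1,1+m} ∘ ω_1 : Σ_A W → G_{1+m}(ι)`. -/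
def omega (R : RelSusp η β) (ι : C(A, X)) (f : C(R.S, X)) (hf : ∀ a, f (R.θ a) = ι a) (m : ℕ) :
    C(R.S, GaneaG ι (1 + m)) :=
  (ganeaGammaFrom ι 1 m).comp (omega1 R ι f hf)

/-- The Hopf category of `f : Σ_A W → X`: the least `n ≥ 1` such that
`g_n : G_n(ι_X) → X` (for `ι_X = f ∘ θ`) admits a homotopy section `σ` with `σ ∘ f ≃ ω_n`. -/
def hcat (R : RelSusp η β) {X : Type u} [TopologicalSpace X] (f : C(R.S, X)) : ℕ∞ :=
  sInf {n : ℕ∞ | ∃ m : ℕ, n = ((1 + m : ℕ) : ℕ∞) ∧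
    ∃ sec : C(X, GaneaG (f.comp R.θ) (1 + m)),
      ((ganeaMap (f.comp R.θ) (1 + m)).comp sec).Homotopic (ContinuousMap.id X) ∧
      (sec.comp f).Homotopic (omega R (f.comp R.θ) f (fun _ => rfl) m)}

/-- A chain of homotopy commutative cubes realizing `Hcat ≤ n`, defined by downward
recursion: `HcatChain R n ιn ζn` says that there are spaces `X_0, …, X_n = X`, maps
`ι_i : A → X_i` with `ι_0` a homotopy equivalence and `ι_n = ιn`, maps
`ζ_i : Σ_A W → X_i` with `ζ_n = ζn`, and for each `i < n` a homotopy commutative cube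
whose top face is the relative suspension square and whose bottom face is a homotopy
pushout as in the definition of the strong Hopf category. -/
def HcatChain (R : RelSusp η β) : (n : ℕ) → {X : Type u} → [TopologicalSpace X] →
    C(A, X) → C(R.S, X) → Prop
  | 0 => fun ιn _ =>
      ∃ lam : C(_, A), (ιn.comp lam).Homotopic (ContinuousMap.id _) ∧
        (lam.comp ιn).Homotopic (ContinuousMap.id A)
  | (n+1) => fun ιn ζn =>
      ∃ (X' : TopCat.{u}) (ι' : C(A, X')) (ζ' : C(R.S, X'))
        (Z : TopCat.{u}) (a : C(Z, A)) (z : C(Z, X')) (w : C(W, Z)) (χ : C(X', _)),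
        IsHPushout a z ιn χ ∧
        (a.comp w).Homotopic η ∧
        (z.comp w).Homotopic (ι'.comp β) ∧
        (ζn.comp R.θ).Homotopic ιn ∧
        (ζn.comp R.θ).Homotopic (χ.comp ι') ∧
        HcatChain R n ι' ζ'

/-- `Hcat f ≤ n`. -/
def HcatLe (R : RelSusp η β) {X : Type u} [TopologicalSpace X] (f : C(R.S, X)) (n : ℕ) : Prop :=
  1 ≤ n ∧ ∃ ιn : C(A, X), HcatChain R n ιn f

/-- The strong Hopf category of `f : Σ_A W → X`. -/
def Hcat (R : RelSusp η β) {X : Type u} [TopologicalSpace X] (f : C(R.S, X)) : ℕ∞ :=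
  sInf {n : ℕ∞ | ∃ m : ℕ, n = (m : ℕ∞) ∧ HcatLe R f m}

end RelSuspension

section Spaces

variable {A Z : Type u} [TopologicalSpace A] [TopologicalSpace Z]

/-- The join `A ⋈ B`: the homotopy pushout (double mapping cylinder) of the two
projections `A ← A × B → B`. -/
@[reducible] def Join (A B : Type u) [TopologicalSpace A] [TopologicalSpace B] : Type u :=
  DCyl (⟨Prod.fst, continuous_fst⟩ : C(A × B, A)) (⟨Prod.snd, continuous_snd⟩ : C(A × B, B))

/-- The iterated join of `n+1` copies of `A` (as a bundled space). -/
def IterJoinT (A : Type u) [TopologicalSpace A] : ℕ → TopCat.{u}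
  | 0 => TopCat.of A
  | (n+1) => TopCat.of (Join ↥(IterJoinT A n) A)

/-- The iterated join of `n+1` copies of `A`. -/
@[reducible] def IterJoin (A : Type u) [TopologicalSpace A] (n : ℕ) : Type u := ↥(IterJoinT A n)

/-- Gluing relation for the wedge `A ∨ A`. -/
inductive WedgeRel (A : Type u) (a₀ : A) : (A ⊕ A) → (A ⊕ A) → Prop
  | basept : WedgeRel A a₀ (Sum.inl a₀) (Sum.inr a₀)

/-- The wedge `A ∨ A` of two copies of the pointed space `(A, a₀)`. -/
@[reducible] def Wedge (A : Type u) [TopologicalSpace A] (a₀ : A) : Type u := Quot (WedgeRel A a₀)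

/-- `pr_1 : A ∨ A → A`, collapsing the second wedge summand. -/
def Wedge.pr1 (a₀ : A) : C(Wedge A a₀, A) :=
  ⟨Quot.lift (Sum.elim id (fun _ => a₀)) (by rintro x y ⟨⟩; rfl),
    continuous_quot_lift _ (continuous_id.sumElim continuous_const)⟩

/-- `pr_2 : A ∨ A → A`, collapsing the first wedge summand. -/
def Wedge.pr2 (a₀ : A) : C(Wedge A a₀, A) :=
  ⟨Quot.lift (Sum.elim (fun _ => a₀) id) (by rintro x y ⟨⟩; rfl),
    continuous_quot_lift _ (continuous_const.sumElim continuous_id)⟩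

/-- The inclusion `t₁ : A ∨ A → A × A` of the wedge in the product. -/
def Wedge.incl (a₀ : A) : C(Wedge A a₀, A × A) :=
  ⟨Quot.lift (Sum.elim (fun x => (x, a₀)) (fun x => (a₀, x))) (by rintro x y ⟨⟩; rfl),
    continuous_quot_lift _ ((continuous_id.prodMk continuous_const).sumElim
      (continuous_const.prodMk continuous_id))⟩

/-- The (unreduced) suspension `ΣZ`, as the double mapping cylinder of `∗ ← Z → ∗`. -/
@[reducible] def Susp (Z : Type u) [TopologicalSpace Z] : Type u :=
  DCyl (ContinuousMap.const Z (PUnit.unit : PUnit.{u+1})) (ContinuousMap.const Z PUnit.unit)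

/-- The north pole of the suspension, used as its basepoint. -/
def Susp.north (Z : Type u) [TopologicalSpace Z] : Susp Z := Quot.mk _ (Sum.inl PUnit.unit)

/-- The map `ι_∗ : A → ∗`. -/
def iotaStar (A : Type u) [TopologicalSpace A] : C(A, PUnit.{u+1}) :=
  ContinuousMap.const A PUnit.unit

/-- The `n`-sphere `S^n ⊆ ℝ^{n+1}`. -/
@[reducible] def Sph (n : ℕ) : Type :=
  ↥(Metric.sphere (0 : EuclideanSpace ℝ (Fin (n+1))) 1)

end Spaces

section OldCW

open CategoryTheory CategoryTheory.Limits

namespace RelativeCWComplex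

/-- The `n-1`-dimensional sphere (in `ℝⁿ`), as a bundled space. -/
def sphere (n : ℤ) : TopCat.{u} :=
  TopCat.of (ULift (Metric.sphere (0 : EuclideanSpace ℝ (Fin (Int.toNat n))) 1))

/-- The `n`-dimensional closed disk (in `ℝⁿ`), as a bundled space. -/
def disk (n : ℤ) : TopCat.{u} :=
  TopCat.of (ULift (Metric.closedBall (0 : EuclideanSpace ℝ (Fin (Int.toNat n))) 1))

/-- The inclusion of the `n-1`-sphere in the `n`-disk. -/
def sphereInclusion (n : ℤ) : sphere.{u} n ⟶ disk.{u} n :=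
  TopCat.ofHom ⟨fun p => ULift.up ⟨p.down.1, Metric.sphere_subset_closedBall p.down.2⟩,
    continuous_uliftUp.comp ((continuous_subtype_val.comp continuous_uliftDown).subtype_mk _)⟩

/-- The disjoint union of the sphere inclusions. -/
def sigmaSphereInclusion (n : ℤ) (cells : Type u) :
    (∐ fun (_ : cells) => sphere.{u} n) ⟶ (∐ fun (_ : cells) => disk.{u} n) :=
  Limits.Sigma.map fun _ => sphereInclusion n

/-- The attaching map of a disjoint union of spheres. -/
def sigmaAttachMap (X : TopCat.{u}) (n : ℤ) (cells : Type u)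
    (attachMaps : cells → (sphere.{u} n ⟶ X)) : (∐ fun (_ : cells) => sphere.{u} n) ⟶ X :=
  Limits.Sigma.desc attachMaps

/-- `X'` is obtained from `X` by attaching `n`-disks. -/
structure AttachCells (X X' : TopCat.{u}) (n : ℤ) where
  /-- the index type of the cells -/
  cells : Type u
  /-- the attaching maps -/
  attachMaps : cells → (sphere.{u} n ⟶ X)
  /-- `X'` is the pushout -/
  isoPushout : X' ≅ pushout (sigmaSphereInclusion n cells) (sigmaAttachMap X n cells attachMaps)

end RelativeCWComplex

/-- A relative CW-complex (Mathlib's December 2024 definition). -/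
structure RelativeCWComplex where
  /-- the skeleta -/
  sk : ℕ → TopCat.{u}
  /-- `sk (n+1)` is obtained from `sk n` by attaching `n`-disks -/
  attachCells (n : ℕ) : RelativeCWComplex.AttachCells (sk n) (sk (n + 1)) n

/-- A CW-complex: a relative CW-complex whose `sk 0` is empty. -/
structure CWComplex extends RelativeCWComplex.{u} where
  /-- `sk 0` is empty -/
  isEmpty_sk_zero : IsEmpty (sk 0)

namespace RelativeCWComplex

/-- The inclusion `sk n → sk (n+1)`. -/
def skInclusion (X : RelativeCWComplex.{u}) (n : ℕ) : X.sk n ⟶ X.sk (n + 1) :=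
  pushout.inr _ _ ≫ (X.attachCells n).isoPushout.inv

/-- The total space: the colimit of the skeleta. -/
def toTopCat (X : RelativeCWComplex.{u}) : TopCat.{u} :=
  colimit (Functor.ofSequence X.skInclusion)

end RelativeCWComplex

end OldCW

section Connectivity

/-- The boundary inclusion `S^{k-1} → D^k`. -/
def diskIncl (k : ℕ) : C(↥(Metric.sphere (0 : EuclideanSpace ℝ (Fin k)) 1),
    ↥(Metric.closedBall (0 : EuclideanSpace ℝ (Fin k)) 1)) :=
  ⟨fun x => ⟨x.1, Metric.sphere_subset_closedBall x.2⟩,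
    Continuous.subtype_mk continuous_subtype_val _⟩

/-- `ι : A → X` is a `c`-connected map: for all `k ≤ c`, every strictly commutative
square on the pair `(D^k, S^{k-1})` admits a lift which is exact on the boundary and
commutes up to homotopy rel the boundary sphere. -/
def IsConnMap (c : ℕ) {A X : Type u} [TopologicalSpace A] [TopologicalSpace X]
    (ι : C(A, X)) : Prop :=
  ∀ k : ℕ, k ≤ c →
    ∀ (v : C(↥(Metric.closedBall (0 : EuclideanSpace ℝ (Fin k)) 1), X))
      (u : C(↥(Metric.sphere (0 : EuclideanSpace ℝ (Fin k)) 1), A)),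
      v.comp (diskIncl k) = ι.comp u →
      ∃ w : C(↥(Metric.closedBall (0 : EuclideanSpace ℝ (Fin k)) 1), A),
        w.comp (diskIncl k) = u ∧
        (ι.comp w).HomotopicRel v (Set.range (diskIncl k))

/-- The space `S` carries a CW-structure all of whose cells have dimension `< d`. -/
def IsCWOfDimLt (S : Type u) [TopologicalSpace S] (d : ℕ) : Prop :=
  ∃ (K : CWComplex.{u}) (_ : S ≃ₜ ↥(RelativeCWComplex.toTopCat K.toRelativeCWComplex)),
    ∀ j : ℕ, d ≤ j → IsEmpty ((K.attachCells j).cells)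

/-- The space `S` carries some CW-structure. -/
def IsCW (S : Type u) [TopologicalSpace S] : Prop :=
  ∃ (K : CWComplex.{u}), Nonempty (S ≃ₜ ↥(RelativeCWComplex.toTopCat K.toRelativeCWComplex))

end Connectivity

/-!
The maps `φ_n` come from the functoriality of the Ganea construction in homotopy commutative
squares. Given `H : χ ∘ ι ≃ κ ∘ a`, one builds inductively `φ_n : G_n(ι) → G_n(κ)` together with
a homotopy `K_n : g_n(κ) ∘ φ_n ≃ χ ∘ g_n(ι)`, starting from `φ_0 = a`. Concatenating `K_n`, the
path of a fibre point and `H` maps the homotopy fibre `F_n(ι)` to `F_n(κ)`, and `φ_{n+1}` is glued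
from `γ_n ∘ φ_n`, `α_{n+1} ∘ a` and this fibre map; hence `φ_{n+1} ∘ γ_n = γ_n ∘ φ_n` on the nose,
and `K_{n+1}` is glued from `K_n`, `H` and a reparametrisation of the concatenated paths.

For the square `hq` restricted along `θ`, the condition `φ_1 ∘ ω_1 ≃ α_1 ∘ ρ` is checked on the
double mapping cylinder of `η` and `β`, which `θ` and `K` identify with `Σ_A W`. The fibre point
`φ_0(ω_0(w))` runs along three sides of the square `(x, y) ↦ hq (x, K (y, w))` and can be pushed
onto its fourth side, the path `κ ∘ ρ ∘ K(·, w)`; in `G_1(κ)` the cylinder over this fibre point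
then slides along `ρ ∘ K(·, w)` onto `α_1 ∘ ρ ∘ K(·, w)`.
-/

def clampI (x : ℝ) : I := Set.projIcc (0 : ℝ) 1 zero_le_one x

@[fun_prop]
theorem continuous_clampI : Continuous clampI := continuous_projIcc (h := zero_le_one)

theorem clampI_eq {x : ℝ} {t : I} (h : x = t) : clampI x = t := by
  subst h; exact Set.projIcc_val zero_le_one t

theorem coe_clampI {x : ℝ} (h₀ : 0 ≤ x) (h₁ : x ≤ 1) : (clampI x : ℝ) = x :=
  congrArg Subtype.val (Set.projIcc_of_mem _ ⟨h₀, h₁⟩)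

theorem clampI_of_nonpos {x : ℝ} (h : x ≤ 0) : clampI x = 0 := Set.projIcc_of_le_left _ h

theorem clampI_of_one_le {x : ℝ} (h : 1 ≤ x) : clampI x = 1 := Set.projIcc_of_right_le _ h

namespace DCyl

variable {W A B P Q : Type u} [TopologicalSpace W] [TopologicalSpace A] [TopologicalSpace B]
  [TopologicalSpace P] [TopologicalSpace Q] {f : C(W, A)} {g : C(W, B)}

def cylinder (f : C(W, A)) (g : C(W, B)) : Homotopy ((inl f g).comp f) ((inr f g).comp g) where
  toFun p := Quot.mk _ (Sum.inr (Sum.inr (p.2, p.1)))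
  continuous_toFun :=
    continuous_quot_mk.comp (continuous_inr.comp (continuous_inr.comp continuous_swap))
  map_zero_left w := (Quot.sound (DCylRel.left w)).symm
  map_one_left w := (Quot.sound (DCylRel.right w)).symm

@[elab_as_elim]
theorem induction_on {motive : DCyl f g → Prop} (x : DCyl f g) (inl : ∀ a, motive (inl f g a))
    (inr : ∀ b, motive (inr f g b)) (cyl : ∀ p, motive (cylinder f g p)) : motive x := by
  induction x using Quot.ind with
  | mk x =>
    rcases x with a | b | ⟨w, t⟩
    exacts [inl a, inr b, cyl (t, w)]

theorem hom_ext {φ ψ : C(DCyl f g, P)} (hl : ∀ a, φ (inl f g a) = ψ (inl f g a))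
    (hr : ∀ b, φ (inr f g b) = ψ (inr f g b))
    (hc : ∀ p, φ (cylinder f g p) = ψ (cylinder f g p)) : φ = ψ :=
  ContinuousMap.ext fun x => induction_on x hl hr hc

theorem comp_glue (φ : C(P, Q)) (u : C(A, P)) (v : C(B, P))
    (H : Homotopy (u.comp f) (v.comp g)) :
    φ.comp (glue u v H) = glue (φ.comp u) (φ.comp v) ((ContinuousMap.Homotopy.refl φ).comp H) :=
  hom_ext (fun _ => rfl) (fun _ => rfl) (fun _ => rfl)

def glueHomotopy {u₀ u₁ : C(A, P)} {v₀ v₁ : C(B, P)}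
    {H₀ : Homotopy (u₀.comp f) (v₀.comp g)} {H₁ : Homotopy (u₁.comp f) (v₁.comp g)}
    (U : Homotopy u₀ u₁) (V : Homotopy v₀ v₁) (Φ : C(I × I × W, P))
    (h₀ : ∀ p, Φ (0, p) = H₀ p) (h₁ : ∀ p, Φ (1, p) = H₁ p)
    (hU : ∀ s w, Φ (s, 0, w) = U (s, f w)) (hV : ∀ s w, Φ (s, 1, w) = V (s, g w)) :
    Homotopy (glue u₀ v₀ H₀) (glue u₁ v₁ H₁) :=
  let F : C(DCyl f g, C(I, P)) :=
    glue (U.toContinuousMap.comp prodSwap).curry (V.toContinuousMap.comp prodSwap).curry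
      { toContinuousMap := (Φ.comp prodSwap).curry
        map_zero_left := fun w => ContinuousMap.ext fun s => hU s w
        map_one_left := fun w => ContinuousMap.ext fun s => hV s w }
  { toFun := fun p => F p.2 p.1
    continuous_toFun := F.uncurry.continuous.comp continuous_swap
    map_zero_left := fun x => induction_on x U.apply_zero V.apply_zero h₀
    map_one_left := fun x => induction_on x U.apply_one V.apply_one h₁ }

end DCyl

section GaneaFunctoriality

variable {A B X Y : Type u} [TopologicalSpace A] [TopologicalSpace B] [TopologicalSpace X]
  [TopologicalSpace Y]

def ganeaCylinder (ι : C(A, X)) (n : ℕ) :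
    Homotopy ((ganeaGamma ι n).comp (ganeaBeta ι n))
      ((ganeaAlpha ι (n + 1)).comp (ganeaEta ι n)) :=
  DCyl.cylinder _ _

theorem comp_ganeaMap_succ (ι : C(A, X)) (χ : C(X, Y)) (n : ℕ) :
    χ.comp (ganeaMap ι (n + 1)) = DCyl.glue (χ.comp (ganeaMap ι n)) (χ.comp ι)
      ((ContinuousMap.Homotopy.refl χ).comp (HPb.evalHomotopy (ganeaMap ι n) ι)) :=
  DCyl.comp_glue _ _ _ _

structure GaneaHom (ι : C(A, X)) (κ : C(B, Y)) (χ : C(X, Y)) (n : ℕ) where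
  toMap : C(GaneaG ι n, GaneaG κ n)
  homotopy : Homotopy ((ganeaMap κ n).comp toMap) (χ.comp (ganeaMap ι n))

namespace GaneaHom

variable {ι : C(A, X)} {κ : C(B, Y)} {a : C(A, B)} {χ : C(X, Y)} {n : ℕ}
  (H : Homotopy (χ.comp ι) (κ.comp a))

def zero : GaneaHom ι κ χ 0 := ⟨a, H.symm⟩

/-- The path `g_n(κ)(φ_n(β q)) ⇝ χ(g_n(ι)(β q)) ⇝ χ(ι(η q)) ⇝ κ(a(η q))`, concatenated
from `d.homotopy`, `χ` applied to the path of the fibre point `q`, and `H`. -/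
def fibrePath (d : GaneaHom ι κ χ n) : C(ganeaF ι n × I, Y) where
  toFun p :=
    if (p.2 : ℝ) ≤ 1 / 2 then d.homotopy (clampI (2 * p.2), p.1.1.1)
    else if (p.2 : ℝ) ≤ 3 / 4 then χ (p.1.1.2.1 (clampI (4 * p.2 - 2)))
    else H (clampI (4 * p.2 - 3), p.1.1.2.2)
  continuous_toFun := by
    refine Continuous.if_le (by fun_prop) (Continuous.if_le (by fun_prop) (by fun_prop)
      (by fun_prop) continuous_const ?_) (by fun_prop) continuous_const ?_
    · intro p hp
      rw [clampI_of_one_le (by linarith), clampI_of_nonpos (by linarith), p.1.2.2, H.apply_zero]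
      rfl
    · intro p hp
      rw [if_pos (by linarith), clampI_of_one_le (by linarith), clampI_of_nonpos (by linarith),
        d.homotopy.apply_one, p.1.2.1]
      rfl

variable {H}

theorem fibrePath_of_le_half (d : GaneaHom ι κ χ n) (q : ganeaF ι n) {u : I}
    (hu : (u : ℝ) ≤ 1 / 2) :
    d.fibrePath H (q, u) = d.homotopy (clampI (2 * u), q.1.1) :=
  if_pos hu

theorem fibrePath_of_le_three_quarters (d : GaneaHom ι κ χ n) (q : ganeaF ι n) {u : I}
    (hu : 1 / 2 < (u : ℝ)) (hu' : (u : ℝ) ≤ 3 / 4) :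
    d.fibrePath H (q, u) = χ (q.1.2.1 (clampI (4 * u - 2))) :=
  (if_neg hu.not_ge).trans (if_pos hu')

theorem fibrePath_of_three_quarters_lt (d : GaneaHom ι κ χ n) (q : ganeaF ι n) {u : I}
    (hu : 3 / 4 < (u : ℝ)) :
    d.fibrePath H (q, u) = H (clampI (4 * u - 3), q.1.2.2) :=
  (if_neg (by linarith)).trans (if_neg hu.not_ge)

variable (H)

def fibreMap (d : GaneaHom ι κ χ n) : C(ganeaF ι n, ganeaF κ n) where
  toFun q := ⟨(d.toMap q.1.1, (d.fibrePath H).curry q, a q.1.2.2), by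
    constructor
    · rw [curry_apply, fibrePath_of_le_half d q (by simp), clampI_of_nonpos (by simp),
        d.homotopy.apply_zero]
      rfl
    · rw [curry_apply, fibrePath_of_three_quarters_lt d q (by norm_num),
        clampI_of_one_le (by norm_num), H.apply_one]
      rfl⟩
  continuous_toFun := by fun_prop

/-- Reparametrising `fibrePath` by `(s, t) ↦ (1 - s) t + s (2 + t) / 4` deforms it onto its middle
segment, the image of the path of the fibre point. -/
def fillingMap (d : GaneaHom ι κ χ n) : C(I × I × ganeaF ι n, Y) where
  toFun p := d.fibrePath H (p.2.2, clampI ((1 - p.1) * p.2.1 + p.1 * ((2 + p.2.1) / 4)))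
  continuous_toFun := by fun_prop

variable {H}

theorem fillingMap_zero (d : GaneaHom ι κ χ n) (t : I) (q : ganeaF ι n) :
    d.fillingMap H (0, t, q) = d.fibrePath H (q, t) := by
  simp only [fillingMap, coe_mk, Set.Icc.coe_zero, sub_zero, one_mul, zero_mul, add_zero]
  rw [clampI_eq rfl]

theorem fillingMap_one (d : GaneaHom ι κ χ n) (t : I) (q : ganeaF ι n) :
    d.fillingMap H (1, t, q) = χ (q.1.2.1 t) := by
  have hu : (clampI ((1 - ((1 : I) : ℝ)) * t + (1 : I) * ((2 + t) / 4)) : ℝ) = (2 + t) / 4 := by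
    rw [coe_clampI] <;> simp <;> linarith [t.2.1, t.2.2]
  rcases t.2.1.eq_or_lt with ht | ht
  · obtain rfl : t = 0 := Subtype.ext ht.symm
    rw [fillingMap, coe_mk, fibrePath_of_le_half d q (by rw [hu]; norm_num),
      clampI_of_one_le (by rw [hu]; norm_num), d.homotopy.apply_one, q.2.1]
    rfl
  · rw [fillingMap, coe_mk, fibrePath_of_le_three_quarters d q (by rw [hu]; linarith)
      (by rw [hu]; linarith [t.2.2]), clampI_eq (t := t) (by rw [hu]; ring)]

theorem fillingMap_left (d : GaneaHom ι κ χ n) (s : I) (q : ganeaF ι n) :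
    d.fillingMap H (s, 0, q) = d.homotopy (s, q.1.1) := by
  have hu : (clampI ((1 - (s : ℝ)) * ((0 : I) : ℝ) + s * ((2 + ((0 : I) : ℝ)) / 4)) : ℝ)
      = s / 2 := by
    rw [coe_clampI] <;> simp <;> linarith [s.2.1, s.2.2]
  rw [fillingMap, coe_mk, fibrePath_of_le_half d q (by rw [hu]; linarith [s.2.2]),
    clampI_eq (t := s) (by rw [hu]; ring)]

theorem fillingMap_right (d : GaneaHom ι κ χ n) (s : I) (q : ganeaF ι n) :
    d.fillingMap H (s, 1, q) = H.symm (s, q.1.2.2) := by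
  have hu : (clampI ((1 - (s : ℝ)) * ((1 : I) : ℝ) + s * ((2 + ((1 : I) : ℝ)) / 4)) : ℝ)
      = 1 - s / 4 := by
    rw [coe_clampI] <;> simp <;> nlinarith [s.2.1, s.2.2]
  rcases s.2.2.eq_or_lt with hs | hs
  · obtain rfl : s = 1 := Subtype.ext hs
    rw [fillingMap, coe_mk, fibrePath_of_le_three_quarters d q (by rw [hu]; norm_num)
      (by rw [hu]; norm_num), clampI_of_one_le (by rw [hu]; norm_num), q.2.2, Homotopy.symm_apply,
      symm_one, H.apply_zero]
    rfl
  · rw [fillingMap, coe_mk, fibrePath_of_three_quarters_lt d q (by rw [hu]; linarith),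
      Homotopy.symm_apply, clampI_eq (t := σ s) (by rw [hu, coe_symm_eq]; ring)]

variable (H)

def succMap (d : GaneaHom ι κ χ n) : C(GaneaG ι (n + 1), GaneaG κ (n + 1)) :=
  DCyl.glue ((ganeaGamma κ n).comp d.toMap) ((ganeaAlpha κ (n + 1)).comp a)
    ((ganeaCylinder κ n).compContinuousMap (d.fibreMap H))

theorem ganeaMap_comp_succMap (d : GaneaHom ι κ χ n) :
    (ganeaMap κ (n + 1)).comp (d.succMap H) =
      DCyl.glue (f := ganeaBeta ι n) (g := ganeaEta ι n) ((ganeaMap κ n).comp d.toMap)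
        (κ.comp a) ((ContinuousMap.Homotopy.refl (ganeaMap κ (n + 1))).comp
          ((ganeaCylinder κ n).compContinuousMap (d.fibreMap H))) :=
  DCyl.comp_glue _ _ _ _

def succ (d : GaneaHom ι κ χ n) : GaneaHom ι κ χ (n + 1) where
  toMap := d.succMap H
  homotopy := (DCyl.glueHomotopy d.homotopy H.symm (d.fillingMap H)
    (fun p => d.fillingMap_zero p.1 p.2) (fun p => d.fillingMap_one p.1 p.2)
    d.fillingMap_left d.fillingMap_right).cast
    (d.ganeaMap_comp_succMap H).symm (comp_ganeaMap_succ ι χ n).symm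

theorem succ_toMap_comp_ganeaGamma (d : GaneaHom ι κ χ n) :
    (d.succ H).toMap.comp (ganeaGamma ι n) = (ganeaGamma κ n).comp d.toMap :=
  rfl

end GaneaHom

variable {ι : C(A, X)} {κ : C(B, Y)} {a : C(A, B)} {χ : C(X, Y)}

def ganeaHomOfSquare (H : Homotopy (χ.comp ι) (κ.comp a)) : (n : ℕ) → GaneaHom ι κ χ n
  | 0 => GaneaHom.zero H
  | n + 1 => (ganeaHomOfSquare H n).succ H

theorem ganeaGammaFrom_comp_ganeaHomOfSquare (H : Homotopy (χ.comp ι) (κ.comp a)) (k m : ℕ) :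
    (ganeaGammaFrom κ k m).comp (ganeaHomOfSquare H k).toMap =
      (ganeaHomOfSquare H (k + m)).toMap.comp (ganeaGammaFrom ι k m) := by
  induction m with
  | zero => rfl
  | succ m ih =>
    change ((ganeaGamma κ (k + m)).comp (ganeaGammaFrom κ k m)).comp _ =
      ((ganeaHomOfSquare H (k + m)).succ H).toMap.comp ((ganeaGamma ι (k + m)).comp _)
    rw [comp_assoc, ih, ← comp_assoc, ← comp_assoc, GaneaHom.succ_toMap_comp_ganeaGamma]

end GaneaFunctoriality

section GaneaOne

variable {W A A' B Y : Type u} [TopologicalSpace W] [TopologicalSpace A] [TopologicalSpace A']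
  [TopologicalSpace B] [TopologicalSpace Y] (κ : C(B, Y)) {f : C(W, A)} {g : C(W, A')}
  {u : C(A, B)} {v : C(A', B)}

def constFibre : C(B, ganeaF κ 0) where
  toFun b := ⟨(b, ContinuousMap.const I (κ b), b), rfl, rfl⟩
  continuous_toFun := by fun_prop

def pathFibre (c : Homotopy (u.comp f) (v.comp g)) : C(W, ganeaF κ 0) where
  toFun w := ⟨(v (g w),
    ContinuousMap.curry ⟨fun q : W × I => κ (c (σ q.2, q.1)), by fun_prop⟩ w, u (f w)),
    by simp; rfl, by simp⟩
  continuous_toFun := by fun_prop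

def pathFibreShrink (c : Homotopy (u.comp f) (v.comp g)) :
    Homotopy (pathFibre κ c) ((constFibre κ).comp (v.comp g)) where
  toFun p := ⟨(v (g p.2),
    ContinuousMap.curry ⟨fun q : (I × W) × I => κ (c (max (σ q.2) q.1.1, q.1.2)),
      by fun_prop⟩ p, c p), by simp [max_eq_left le_one']; rfl, by simp⟩
  continuous_toFun := by fun_prop
  map_zero_left w := by
    refine Subtype.ext (Prod.ext rfl (Prod.ext (ContinuousMap.ext fun s => ?_) (c.apply_zero w)))
    simp only [coe_mk, curry_apply, max_eq_left nonneg']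
    rfl
  map_one_left w := by
    refine Subtype.ext (Prod.ext rfl (Prod.ext (ContinuousMap.ext fun s => ?_) ?_))
    · simp [max_eq_right le_one']; rfl
    · simp; rfl

/-- Reparametrised to stay at `γ_0` for `s ≤ 1 / 2`, as needed in `glue_pathFibre_homotopic`. -/
def ganeaGammaHomotopyAlpha : Homotopy (ganeaGamma κ 0) (ganeaAlpha κ 1) where
  toFun p := ganeaCylinder κ 0 (clampI (2 * p.1 - 1), constFibre κ p.2)
  continuous_toFun := (ganeaCylinder κ 0).continuous.comp
    (by have := map_continuous (constFibre κ); fun_prop)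
  map_zero_left b := by
    rw [Set.Icc.coe_zero, clampI_of_nonpos (by norm_num), (ganeaCylinder κ 0).apply_zero]
    rfl
  map_one_left b := by
    rw [Set.Icc.coe_one, clampI_of_one_le (by norm_num), (ganeaCylinder κ 0).apply_one]
    rfl

/-- Sliding the fibre points of `c` to their ends deforms the cylinder homotopy they define in
`G_1(κ)` into `α_1 ∘ c`. -/
theorem glue_pathFibre_homotopic (c : Homotopy (u.comp f) (v.comp g)) :
    (DCyl.glue ((ganeaAlpha κ 1).comp u) ((ganeaGamma κ 0).comp v)
      ((ganeaCylinder κ 0).compContinuousMap (pathFibre κ c)).symm).Homotopic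
      ((ganeaAlpha κ 1).comp (DCyl.glue u v c)) := by
  let Φ : C(I × I × W, GaneaG κ 1) :=
    ⟨fun p => ganeaCylinder κ 0 (max (σ p.2.1) (clampI (2 * p.1 - 1)),
      pathFibreShrink κ c (min p.2.1 (clampI (2 * p.1)), p.2.2)), by fun_prop⟩
  rw [DCyl.comp_glue]
  refine ⟨DCyl.glueHomotopy (.refl _) ((ganeaGammaHomotopyAlpha κ).compContinuousMap v) Φ
    (fun p => ?_) (fun p => ?_) (fun s w => ?_) (fun s w => ?_)⟩
  · simp only [Φ, coe_mk, Set.Icc.coe_zero]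
    rw [clampI_of_nonpos (by norm_num), clampI_of_nonpos (by norm_num), max_eq_left nonneg',
      min_eq_right nonneg', (pathFibreShrink κ c).apply_zero]
    rfl
  · simp only [Φ, coe_mk, Set.Icc.coe_one]
    rw [clampI_of_one_le (by norm_num), clampI_of_one_le (by norm_num), max_eq_right le_one',
      min_eq_left le_one', (ganeaCylinder κ 0).apply_one]
    rfl
  · simp only [Φ, coe_mk, symm_zero]
    rw [max_eq_left le_one', min_eq_left nonneg', (ganeaCylinder κ 0).apply_one]
    exact congrArg (ganeaAlpha κ 1) (c.apply_zero w)
  · simp only [Φ, coe_mk, symm_one]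
    rw [max_eq_right nonneg', min_eq_right le_one']
    change ganeaCylinder κ 0 (_, pathFibreShrink κ c (clampI (2 * s), w)) =
      ganeaCylinder κ 0 (clampI (2 * s - 1), constFibre κ (v (g w)))
    rcases le_or_gt (2 * (s : ℝ) - 1) 0 with hs | hs
    · rw [clampI_of_nonpos hs, (ganeaCylinder κ 0).apply_zero, (ganeaCylinder κ 0).apply_zero]
      rfl
    · rw [clampI_of_one_le (x := 2 * s) (by linarith), (pathFibreShrink κ c).apply_one]
      rfl

end GaneaOne

/-- At `r = 0`, `u ↦ squareDeformation (r, u)` runs through the corners `(1,1), (0,1), (0,0),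
`(1,0)` of the unit square, on the time intervals of `GaneaHom.fibrePath`; at `r = 1` it runs
straight from `(1,1)` to `(1,0)`. Both ends stay fixed. -/
def squareDeformation : C(I × I, I × I) where
  toFun p := (max (max (σ (clampI (2 * p.2))) (clampI (4 * p.2 - 3))) p.1,
    σ (clampI ((1 - p.1) * (4 * p.2 - 2) + p.1 * p.2)))
  continuous_toFun := by fun_prop

theorem squareDeformation_source (r : I) : squareDeformation (r, 0) = (1, 1) := by
  simp only [squareDeformation, coe_mk, Set.Icc.coe_zero, mul_zero, zero_sub, add_zero]
  rw [clampI_of_nonpos le_rfl, symm_zero, clampI_of_nonpos (by norm_num),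
    clampI_of_nonpos (by nlinarith [r.2.2]), symm_zero, max_eq_left le_one', max_eq_left le_one']

theorem squareDeformation_target (r : I) : squareDeformation (r, 1) = (1, 0) := by
  simp only [squareDeformation, coe_mk, Set.Icc.coe_one, mul_one]
  rw [clampI_of_one_le (by norm_num), symm_one, clampI_of_one_le (by norm_num),
    clampI_of_one_le (by nlinarith [r.2.2]), symm_one, max_eq_right nonneg', max_eq_left le_one']

theorem squareDeformation_one (u : I) : squareDeformation (1, u) = (1, σ u) := by
  simp only [squareDeformation, coe_mk, Set.Icc.coe_one, sub_self, zero_mul, zero_add, one_mul]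
  rw [max_eq_right le_one', clampI_eq rfl]

theorem squareDeformation_zero_of_le_half {u : I} (hu : (u : ℝ) ≤ 1 / 2) :
    squareDeformation (0, u) = (σ (clampI (2 * u)), 1) := by
  simp only [squareDeformation, coe_mk, Set.Icc.coe_zero, sub_zero, one_mul, zero_mul, add_zero]
  rw [clampI_of_nonpos (x := 4 * u - 3) (by linarith),
    clampI_of_nonpos (x := 4 * u - 2) (by linarith), symm_zero, max_eq_left nonneg',
    max_eq_left nonneg']

theorem squareDeformation_zero_of_le_three_quarters {u : I} (hu : 1 / 2 < (u : ℝ))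
    (hu' : (u : ℝ) ≤ 3 / 4) :
    squareDeformation (0, u) = (0, σ (clampI (4 * u - 2))) := by
  simp only [squareDeformation, coe_mk, Set.Icc.coe_zero, sub_zero, one_mul, zero_mul, add_zero]
  rw [clampI_of_nonpos (x := 4 * u - 3) (by linarith), clampI_of_one_le (x := 2 * u) (by linarith),
    symm_one, max_self, max_self]

theorem squareDeformation_zero_of_three_quarters_lt {u : I} (hu : 3 / 4 < (u : ℝ)) :
    squareDeformation (0, u) = (clampI (4 * u - 3), 0) := by
  simp only [squareDeformation, coe_mk, Set.Icc.coe_zero, sub_zero, one_mul, zero_mul, add_zero]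
  rw [clampI_of_one_le (x := 2 * u) (by linarith), clampI_of_one_le (x := 4 * u - 2) (by linarith),
    symm_one, max_eq_right nonneg', max_eq_left nonneg']

section RelativeSuspension

variable {W A B X Y : Type u} [TopologicalSpace W] [TopologicalSpace A] [TopologicalSpace B]
  [TopologicalSpace X] [TopologicalSpace Y] {η β : C(W, A)} (R : RelSusp η β)

variable {f : C(R.S, X)} {ρ : C(R.S, B)} {κ : C(B, Y)} {χ : C(X, Y)}

def squareOnBase (hq : Homotopy (χ.comp f) (κ.comp ρ)) :
    Homotopy (χ.comp (f.comp R.θ)) (κ.comp (ρ.comp R.θ)) :=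
  hq.compContinuousMap R.θ

variable (ρ) in
def baseHomotopy : Homotopy ((ρ.comp R.θ).comp η) ((ρ.comp R.θ).comp β) :=
  (ContinuousMap.Homotopy.refl ρ).comp R.K

theorem comp_glue_baseHomotopy :
    ρ.comp (DCyl.glue R.θ R.θ R.K) =
      DCyl.glue (ρ.comp R.θ) (ρ.comp R.θ) (baseHomotopy R ρ) :=
  DCyl.comp_glue _ _ _ _

/-- The path of the fibre point `φ_0(ω_0(w))` is `(x, y) ↦ hq (x, K (y, w))` along three sides
of the unit square; `squareDeformation` pushes it onto the fourth side. -/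
def squareFilling (hq : Homotopy (χ.comp f) (κ.comp ρ)) :
    Homotopy (((GaneaHom.zero (squareOnBase R hq)).fibreMap (squareOnBase R hq)).comp
      (omegaF R (f.comp R.θ) f fun _ => rfl)) (pathFibre κ (baseHomotopy R ρ)) where
  toFun p := ⟨(ρ (R.θ (β p.2)),
    ContinuousMap.curry ⟨fun q : (I × W) × I => hq ((squareDeformation (q.1.1, q.2)).1,
      R.K ((squareDeformation (q.1.1, q.2)).2, q.1.2)), by fun_prop⟩ p, ρ (R.θ (η p.2))), by
    rw [curry_apply, coe_mk, squareDeformation_source, R.K.apply_one, hq.apply_one]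
    rfl, by
    rw [curry_apply, coe_mk, squareDeformation_target, R.K.apply_zero, hq.apply_one]
    rfl⟩
  continuous_toFun := by fun_prop
  map_zero_left w := by
    refine Subtype.ext (Prod.ext rfl (Prod.ext (ContinuousMap.ext fun u => ?_) rfl))
    change _ = (GaneaHom.zero (squareOnBase R hq)).fibrePath (squareOnBase R hq) (_, u)
    simp only [curry_apply, coe_mk]
    rcases le_or_gt (u : ℝ) (1 / 2) with hu | hu
    · rw [squareDeformation_zero_of_le_half hu, GaneaHom.fibrePath_of_le_half _ _ hu,
        R.K.apply_one]
      rfl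
    rcases le_or_gt (u : ℝ) (3 / 4) with hu' | hu'
    · rw [squareDeformation_zero_of_le_three_quarters hu hu',
        GaneaHom.fibrePath_of_le_three_quarters _ _ hu hu', hq.apply_zero]
      rfl
    · rw [squareDeformation_zero_of_three_quarters_lt hu',
        GaneaHom.fibrePath_of_three_quarters_lt _ _ hu', R.K.apply_zero]
      rfl
  map_one_left w := by
    refine Subtype.ext (Prod.ext rfl (Prod.ext (ContinuousMap.ext fun u => ?_) rfl))
    simp only [curry_apply, coe_mk, squareDeformation_one, hq.apply_one]
    rfl

theorem ganeaHomOfSquare_one_comp_omegaDCyl_homotopic (hq : Homotopy (χ.comp f) (κ.comp ρ)) :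
    ((ganeaHomOfSquare (squareOnBase R hq) 1).toMap.comp
      (omegaDCyl R (f.comp R.θ) f fun _ => rfl)).Homotopic
      (DCyl.glue ((ganeaAlpha κ 1).comp (ρ.comp R.θ)) ((ganeaGamma κ 0).comp (ρ.comp R.θ))
        ((ganeaCylinder κ 0).compContinuousMap (pathFibre κ (baseHomotopy R ρ))).symm) := by
  have e : (ganeaHomOfSquare (squareOnBase R hq) 1).toMap.comp
      (omegaDCyl R (f.comp R.θ) f fun _ => rfl) =
      DCyl.glue (f := η) (g := β) ((ganeaAlpha κ 1).comp (ρ.comp R.θ))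
        ((ganeaGamma κ 0).comp (ρ.comp R.θ)) ((ganeaCylinder κ 0).compContinuousMap
          (((GaneaHom.zero (squareOnBase R hq)).fibreMap (squareOnBase R hq)).comp
            (omegaF R (f.comp R.θ) f fun _ => rfl))).symm :=
    DCyl.hom_ext (fun _ => rfl) (fun _ => rfl) (fun _ => rfl)
  let Φ : C(I × I × W, GaneaG κ 1) :=
    ⟨fun p => ganeaCylinder κ 0 (σ p.2.1, squareFilling R hq (p.1, p.2.2)), by fun_prop⟩
  rw [e]
  refine ⟨DCyl.glueHomotopy (.refl _) (.refl _) Φ (fun p => ?_) (fun p => ?_) (fun s w => ?_)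
    (fun s w => ?_)⟩
  · exact congrArg (fun q => ganeaCylinder κ 0 (σ p.1, q)) ((squareFilling R hq).apply_zero p.2)
  · exact congrArg (fun q => ganeaCylinder κ 0 (σ p.1, q)) ((squareFilling R hq).apply_one p.2)
  · simp only [Φ, coe_mk, symm_zero, (ganeaCylinder κ 0).apply_one]
    rfl
  · simp only [Φ, coe_mk, symm_one, (ganeaCylinder κ 0).apply_zero]
    rfl

theorem ganeaHomOfSquare_one_comp_omega_homotopic (hq : Homotopy (χ.comp f) (κ.comp ρ)) :
    ((ganeaHomOfSquare (squareOnBase R hq) 1).toMap.comp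
      (omega R (f.comp R.θ) f (fun _ => rfl) 0)).Homotopic ((ganeaAlpha κ 1).comp ρ) := by
  have hslide := glue_pathFibre_homotopic κ (baseHomotopy R ρ)
  rw [← comp_glue_baseHomotopy] at hslide
  exact (((ganeaHomOfSquare_one_comp_omegaDCyl_homotopic R hq).trans hslide).comp
    (.refl R.inv)).trans ((Homotopic.refl ((ganeaAlpha κ 1).comp ρ)).comp R.glue_inv)

end RelativeSuspension

/-- Let `η, β : W → A`, `f : Σ_A W → X` with `ι_X = f ∘ θ`, and let
`ρ : Σ_A W → B`, `κ_Y : B → Y`, `χ : X → Y` form a homotopy commutative square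
`χ ∘ f ≃ κ_Y ∘ ρ`. Then for every `n = 1 + m ≥ 1` this square splits through the Ganea
constructions: there exist maps `φ_1 : G_1(ι_X) → G_1(κ_Y)` and `φ_n : G_n(ι_X) → G_n(κ_Y)`
such that `φ_1 ∘ ω_1 ≃ α_1(κ_Y) ∘ ρ`, `γ_{1,n}(κ_Y) ∘ φ_1 ≃ φ_n ∘ γ_{1,n}(ι_X)` and
`g_n(κ_Y) ∘ φ_n ≃ χ ∘ g_n(ι_X)`, where the Ganea construction of `κ_Y : B → Y` has base `B`. -/
theorem ganea_splitting_of_square {W A B X Y : Type u} [TopologicalSpace W] [TopologicalSpace A]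
    [TopologicalSpace B] [TopologicalSpace X] [TopologicalSpace Y]
    {η β : C(W, A)} (R : RelSusp η β) (f : C(R.S, X)) (ρ : C(R.S, B)) (κ : C(B, Y))
    (χ : C(X, Y)) (hsq : (χ.comp f).Homotopic (κ.comp ρ)) (m : ℕ) :
    ∃ (φ₁ : C(GaneaG (f.comp R.θ) 1, GaneaG κ 1))
      (φn : C(GaneaG (f.comp R.θ) (1 + m), GaneaG κ (1 + m))),
      (φ₁.comp (omega R (f.comp R.θ) f (fun _ => rfl) 0)).Homotopic ((ganeaAlpha κ 1).comp ρ) ∧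
      ((ganeaGammaFrom κ 1 m).comp φ₁).Homotopic (φn.comp (ganeaGammaFrom (f.comp R.θ) 1 m)) ∧
      ((ganeaMap κ (1 + m)).comp φn).Homotopic (χ.comp (ganeaMap (f.comp R.θ) (1 + m))) := by
  obtain ⟨hq⟩ := hsq
  let φ := ganeaHomOfSquare (squareOnBase R hq)
  refine ⟨(φ 1).toMap, (φ (1 + m)).toMap, ganeaHomOfSquare_one_comp_omega_homotopic R hq, ?_,
    ⟨(φ (1 + m)).homotopy⟩⟩
  rw [ganeaGammaFrom_comp_ganeaHomOfSquare]
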